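/- ∑_{k=1}^∞ (8/3)^k / C(3k,k) = 32/49 + (74√3·π)/343 − (18/343)·log 3. -/

import Mathlib

/-!
Writing `1 / C(3k, k)` as the Beta integral `(3k + 1) ∫₀¹ x^k (1 - x)^(2k) dx` turns the series
into `∫₀¹ ∑ (3k + 4) t^(k+1) dx` with `t = (8/3) x (1 - x)²`. On `[0, 1]` we have `t ≤ 32/81`, so the
sum may be taken inside the integral, where it is the rational function `t (4 - t) / (1 - t)²`.
Since `3 (1 - t) = (3 - 2x)(4x² - 2x + 1)`, partial fractions give an elementary primitive whose
logarithmic and arctangent parts produce `log 3` and `π √3`.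
-/

open Real intervalIntegral Set
open scoped Nat

lemma integral_pow_mul_one_sub_pow_succ (m n : ℕ) :
    ∫ x in (0 : ℝ)..1, x ^ m * (1 - x) ^ (n + 1) =
      (n + 1) / (m + 1) * ∫ x in (0 : ℝ)..1, x ^ (m + 1) * (1 - x) ^ n := by
  have hu : ∀ x ∈ uIcc (0 : ℝ) 1,
      HasDerivAt (fun y : ℝ => (1 - y) ^ (n + 1)) (-((n + 1) * (1 - x) ^ n)) x := by
    intro x _
    simpa [mul_comm] using ((hasDerivAt_id x).const_sub 1).fun_pow (n + 1)
  have hv : ∀ x ∈ uIcc (0 : ℝ) 1,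
      HasDerivAt (fun y : ℝ => y ^ (m + 1) / (m + 1)) (x ^ m) x := by
    intro x _
    refine ((hasDerivAt_pow (m + 1) x).div_const _).congr_deriv ?_
    rw [Nat.add_sub_cancel]
    push_cast
    field_simp
  have hparts := integral_mul_deriv_eq_deriv_mul hu hv
    (Continuous.intervalIntegrable (by fun_prop) _ _)
    (Continuous.intervalIntegrable (by fun_prop) _ _)
  have hrearrange : (fun x : ℝ => -(((n : ℝ) + 1) * (1 - x) ^ n) * (x ^ (m + 1) / (m + 1))) =
      fun x => -(((n : ℝ) + 1) / (m + 1)) * (x ^ (m + 1) * (1 - x) ^ n) := by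
    funext x
    ring
  rw [hrearrange, integral_const_mul] at hparts
  conv_lhs => enter [1, x]; rw [mul_comm]
  rw [hparts]
  simp

lemma integral_pow_mul_one_sub_pow (m n : ℕ) :
    ∫ x in (0 : ℝ)..1, x ^ m * (1 - x) ^ n = (m ! * n ! : ℝ) / (m + n + 1)! := by
  induction n generalizing m with
  | zero =>
    simp only [pow_zero, mul_one, integral_pow, Nat.factorial_zero, Nat.cast_one, add_zero,
      Nat.factorial_succ]
    push_cast
    field_simp
    simp
  | succ n ih =>
    rw [integral_pow_mul_one_sub_pow_succ, ih, show m + 1 + n + 1 = m + (n + 1) + 1 by ring,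
      Nat.factorial_succ m, Nat.factorial_succ n]
    push_cast
    field_simp

lemma inv_choose_eq_integral {n k : ℕ} (h : k ≤ n) :
    ((n.choose k : ℝ))⁻¹ = (n + 1) * ∫ x in (0 : ℝ)..1, x ^ k * (1 - x) ^ (n - k) := by
  have hfact : (n.choose k * k ! * (n - k)! : ℝ) = n ! := by
    exact_mod_cast Nat.choose_mul_factorial_mul_factorial h
  have hchoose : (n.choose k : ℝ) ≠ 0 := by exact_mod_cast (Nat.choose_pos h).ne'
  rw [integral_pow_mul_one_sub_pow, Nat.add_sub_cancel' h, Nat.factorial_succ]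
  push_cast
  rw [← hfact]
  field_simp

lemma eight_thirds_pow_div_choose_eq_integral (k : ℕ) :
    (8 / 3 : ℝ) ^ (k + 1) / ((3 * (k + 1)).choose (k + 1) : ℕ) =
      ∫ x in (0 : ℝ)..1, (3 * k + 4) * (8 / 3 * (x * (1 - x) ^ 2)) ^ (k + 1) := by
  rw [div_eq_mul_inv, inv_choose_eq_integral (by omega),
    show 3 * (k + 1) - (k + 1) = 2 * (k + 1) by omega, ← integral_const_mul,
    ← integral_const_mul]
  congr 1
  funext x
  rw [mul_pow, mul_pow, ← pow_mul]
  push_cast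
  ring

lemma hasSum_linear_mul_geometric {𝕜 : Type*} [NormedField 𝕜] [CompleteSpace 𝕜] {t : 𝕜}
    (ht : ‖t‖ < 1) (a b : 𝕜) :
    HasSum (fun k : ℕ => (a * k + b) * t ^ k) (a * t / (1 - t) ^ 2 + b / (1 - t)) := by
  simpa only [add_mul, mul_assoc, div_eq_mul_inv] using
    ((hasSum_coe_mul_geometric_of_norm_lt_one ht).mul_left a).add
      ((hasSum_geometric_of_norm_lt_one ht).mul_left b)

lemma cubic_mem_Icc {x : ℝ} (hx : x ∈ Icc (0 : ℝ) 1) :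
    8 / 3 * (x * (1 - x) ^ 2) ∈ Icc (0 : ℝ) (32 / 81) := by
  obtain ⟨hx0, hx1⟩ := hx
  constructor
  · have : 0 ≤ 1 - x := by linarith
    positivity
  -- `32/81 - t = (8/81) (3x - 1)² (4 - 3x)`
  · nlinarith [mul_nonneg (sq_nonneg (3 * x - 1)) (by linarith : (0 : ℝ) ≤ 4 - 3 * x)]

noncomputable def summedIntegrand (x : ℝ) : ℝ :=
  27 / ((3 - 2 * x) * (4 * x ^ 2 - 2 * x + 1)) ^ 2 - 6 / ((3 - 2 * x) * (4 * x ^ 2 - 2 * x + 1)) - 1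

lemma hasSum_summedIntegrand {x : ℝ} (hx : x ∈ Icc (0 : ℝ) 1) :
    HasSum (fun k : ℕ => (3 * k + 4) * (8 / 3 * (x * (1 - x) ^ 2)) ^ (k + 1))
      (summedIntegrand x) := by
  set t := 8 / 3 * (x * (1 - x) ^ 2) with ht_def
  obtain ⟨ht0, ht1⟩ := cubic_mem_Icc hx
  have ht : ‖t‖ < 1 := by rw [norm_of_nonneg ht0]; linarith
  have hfactor : (3 - 2 * x) * (4 * x ^ 2 - 2 * x + 1) = 3 * (1 - t) := by rw [ht_def]; ring
  have hne : 1 - t ≠ 0 := by linarith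
  have hsum : summedIntegrand x = t * (3 * t / (1 - t) ^ 2 + 4 / (1 - t)) := by
    simp only [summedIntegrand, hfactor]
    field_simp
    ring
  rw [hsum]
  exact ((hasSum_linear_mul_geometric ht 3 4).mul_left t).congr_fun fun k => by ring

lemma hasSum_integral_series :
    HasSum (fun k : ℕ => ∫ x in (0 : ℝ)..1, (3 * k + 4) * (8 / 3 * (x * (1 - x) ^ 2)) ^ (k + 1))
      (∫ x in (0 : ℝ)..1, summedIntegrand x) := by
  have hsummable : Summable fun k : ℕ => (3 * k + 4) * (32 / 81 : ℝ) ^ (k + 1) :=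
    ((hasSum_linear_mul_geometric (t := (32 / 81 : ℝ)) (by norm_num [abs_of_pos]) 3 4).mul_left
      (32 / 81)).summable.congr fun k => by ring
  refine hasSum_integral_of_dominated_convergence (fun k _ => (3 * k + 4) * (32 / 81) ^ (k + 1))
    (fun k => Continuous.aestronglyMeasurable (by fun_prop)) (fun k => ?_)
    (MeasureTheory.ae_of_all _ fun _ _ => hsummable) intervalIntegrable_const
    (MeasureTheory.ae_of_all _ fun x hx => hasSum_summedIntegrand (Ioc_subset_Icc_self ?_))
  · refine MeasureTheory.ae_of_all _ fun x hx => ?_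
    obtain ⟨ht0, ht1⟩ := cubic_mem_Icc (Ioc_subset_Icc_self (by simpa using hx))
    rw [norm_of_nonneg (mul_nonneg (by positivity) (pow_nonneg ht0 _))]
    gcongr
  · simpa using hx

lemma quadratic_pos (x : ℝ) : 0 < 4 * x ^ 2 - 2 * x + 1 := by
  nlinarith [sq_nonneg (4 * x - 1)]

lemma hasDerivAt_sqrt_three_mul_arctan (x : ℝ) :
    HasDerivAt (fun y => √3 * arctan ((4 * y - 1) / √3)) (3 / (4 * x ^ 2 - 2 * x + 1)) x := by
  have hinner : HasDerivAt (fun y : ℝ => (4 * y - 1) / √3) (4 / √3) x := by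
    simpa using (((hasDerivAt_id x).const_mul 4).sub_const 1).div_const √3
  refine (hinner.arctan.const_mul √3).congr_deriv ?_
  have hsqrt : √3 ^ 2 = 3 := sq_sqrt (by norm_num)
  have hq := (quadratic_pos x).ne'
  set q := 4 * x ^ 2 - 2 * x + 1 with hq_def
  field_simp
  rw [hsqrt, hq_def]
  ring

noncomputable def summedIntegrandPrimitive (x : ℝ) : ℝ :=
  12 / 343 * log (3 - 2 * x) - 6 / 343 * log (4 * x ^ 2 - 2 * x + 1)
    + 148 / 343 * (√3 * arctan ((4 * x - 1) / √3))
    + 27 / 98 / (3 - 2 * x) + (198 * x - 117) / (98 * (4 * x ^ 2 - 2 * x + 1)) - x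

lemma hasDerivAt_summedIntegrandPrimitive {x : ℝ} (hx : x < 3 / 2) :
    HasDerivAt summedIntegrandPrimitive (summedIntegrand x) x := by
  have hlin : 3 - 2 * x ≠ 0 := by linarith
  have hquad := (quadratic_pos x).ne'
  have hL : HasDerivAt (fun y : ℝ => 3 - 2 * y) (-2) x := by
    simpa using ((hasDerivAt_id x).const_mul 2).const_sub 3
  have hQ : HasDerivAt (fun y : ℝ => 4 * y ^ 2 - 2 * y + 1) (8 * x - 2) x := by
    refine ((((hasDerivAt_pow 2 x).const_mul 4).sub ((hasDerivAt_id x).const_mul 2)).add_const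
      1).congr_deriv ?_
    norm_num
    ring
  have hR : HasDerivAt (fun y : ℝ => (198 * y - 117) / (98 * (4 * y ^ 2 - 2 * y + 1)))
      ((198 * (98 * (4 * x ^ 2 - 2 * x + 1)) - (198 * x - 117) * (98 * (8 * x - 2))) /
        (98 * (4 * x ^ 2 - 2 * x + 1)) ^ 2) x := by
    refine HasDerivAt.div ?_ (hQ.const_mul 98) (by positivity)
    simpa using ((hasDerivAt_id x).const_mul 198).sub_const 117
  have := (((((hL.log hlin).const_mul (12 / 343)).sub ((hQ.log hquad).const_mul (6 / 343))).add
    ((hasDerivAt_sqrt_three_mul_arctan x).const_mul (148 / 343))).add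
      ((hasDerivAt_const x (27 / 98 : ℝ)).div hL hlin)).add hR |>.sub (hasDerivAt_id x)
  refine this.congr_deriv ?_
  simp only [summedIntegrand]
  set q := 4 * x ^ 2 - 2 * x + 1 with hq_def
  field_simp
  rw [hq_def]
  ring

lemma integral_summedIntegrand :
    ∫ x in (0 : ℝ)..1, summedIntegrand x = 32 / 49 + 74 * √3 * π / 343 - 18 / 343 * log 3 := by
  have hcont : ContinuousOn summedIntegrand (uIcc 0 1) := by
    refine continuousOn_of_forall_continuousAt fun x hx => ?_
    rw [uIcc_of_le zero_le_one] at hx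
    have hden : (3 - 2 * x) * (4 * x ^ 2 - 2 * x + 1) ≠ 0 :=
      mul_ne_zero (by linarith [hx.2]) (quadratic_pos x).ne'
    unfold summedIntegrand
    fun_prop (disch := simp [hden])
  rw [integral_eq_sub_of_hasDerivAt (fun x hx => hasDerivAt_summedIntegrandPrimitive ?_)
    (hcont.intervalIntegrable)]
  · have h1 : (4 * 1 - 1) / √3 = √3 := by
      rw [div_eq_iff (by positivity), mul_self_sqrt (by norm_num)]
      norm_num
    have h0 : (4 * 0 - 1) / √3 = -(√3)⁻¹ := by
      ring
    simp only [summedIntegrandPrimitive]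
    rw [h1, h0, arctan_neg, arctan_sqrt_three, arctan_inv_sqrt_three]
    norm_num
    ring
  · rw [uIcc_of_le zero_le_one] at hx
    linarith [hx.2]

theorem stmt_5 :
    ∑' k : ℕ, (8/3 : ℝ)^(k+1) / ((((3*(k+1)).choose (k+1) : ℕ)) : ℝ) =
    32/49 + (74*Real.sqrt 3*π)/343 - (18/343)*Real.log 3 := by
  rw [← integral_summedIntegrand]
  exact (hasSum_integral_series.congr_fun eight_thirds_pow_div_choose_eq_integral).tsum_eq
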